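/- For all integers n and t with 0 < t < n − 1, the single-exclusion number satisfies the recurrence inequality S(n,t) ≤ S(n−1, t−1) + T(n−1, t+1, t). -/

import Mathlib

/-- An `(n,t)`-single-exclusion system: a collection of `t`-subsets (blocks) of an
`n`-set such that every subset `X` with `1 ≤ |X| ≤ t+1` has a block containing all
but exactly one element of `X`. -/
def IsSESystem (n t : ℕ) (S : Finset (Finset (Fin n))) : Prop :=
  (∀ B ∈ S, B.card = t) ∧
  ∀ X : Finset (Fin n), 1 ≤ X.card → X.card ≤ t + 1 → ∃ B ∈ S, (X \ B).card = 1

/-- The `(n,t)`-single-exclusion number `S(n,t)`: the least number of blocks in an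
`(n,t)`-single-exclusion system. -/
noncomputable def SENumber (n t : ℕ) : ℕ :=
  sInf {m : ℕ | ∃ S : Finset (Finset (Fin n)), IsSESystem n t S ∧ S.card = m}
/-- An `(n,s,t)`-Turán system: a collection of `t`-subsets (blocks) of an `n`-set
such that every `s`-subset contains at least one block. -/
def IsTuranSystem (n s t : ℕ) (T : Finset (Finset (Fin n))) : Prop :=
  (∀ B ∈ T, B.card = t) ∧
  ∀ X : Finset (Fin n), X.card = s → ∃ B ∈ T, B ⊆ X

/-- The `(n,s,t)`-Turán number `T(n,s,t)`: the least number of blocks in an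
`(n,s,t)`-Turán system. -/
noncomputable def turanNumber (n s t : ℕ) : ℕ :=
  sInf {m : ℕ | ∃ T : Finset (Finset (Fin n)), IsTuranSystem n s t T ∧ T.card = m}

/-!
Given an `(n-1, t-1)`-single-exclusion system `S` and an `(n-1, t+1, t)`-Turán system `T` on
`Fin (n-1)`, view `Fin (n-1)` inside `Fin n` and add the point `last`. The blocks `B ∪ {last}`
for `B ∈ S` together with the blocks of `T` form an `(n, t)`-single-exclusion system. For a set
`X` with trace `Y` on `Fin (n-1)`: if `1 ≤ |Y| ≤ t`, the `S`-block excluding exactly one point of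
`Y` also swallows `last`; if `|Y| = t + 1`, then `X = Y` and a `T`-block inside `Y` excludes one
point; if `Y = ∅`, then `X = {last}` and any `T`-block avoids `last`.
-/

open Finset

namespace Fin

variable {m : ℕ}

lemma map_castSuccEmb_preimage_sdiff (X : Finset (Fin (m + 1))) (B : Finset (Fin m)) :
    (X.preimage castSucc (castSucc_injective m).injOn \ B).map castSuccEmb =
      (X \ B.map castSuccEmb).erase (last m) := by
  ext x
  cases x using lastCases <;> simp [castSuccEmb_apply, castSucc_ne_last]

lemma card_sdiff_map_castSuccEmb (X : Finset (Fin (m + 1))) (B : Finset (Fin m)) :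
    #(X \ B.map castSuccEmb) =
      #(X.preimage castSucc (castSucc_injective m).injOn \ B) + if last m ∈ X then 1 else 0 := by
  rw [← card_map castSuccEmb (s := _ \ B), map_castSuccEmb_preimage_sdiff]
  have hlast : last m ∉ B.map castSuccEmb := by simp [castSuccEmb_apply, castSucc_ne_last]
  split_ifs with hX
  · exact (card_erase_add_one (mem_sdiff.mpr ⟨hX, hlast⟩)).symm
  · rw [erase_eq_of_notMem (fun h ↦ hX (mem_sdiff.mp h).1), add_zero]

end Fin

open Fin

lemma exists_isSESystem {n t : ℕ} (h : t < n) : ∃ S, IsSESystem n t S := by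
  refine ⟨powersetCard t univ, fun B hB ↦ (mem_powersetCard.mp hB).2, fun X hX1 hXt ↦ ?_⟩
  obtain ⟨x, hx⟩ := card_pos.mp hX1
  obtain ⟨B, hXB, hBx, hB⟩ :=
    exists_subsuperset_card_eq (n := t) (erase_subset_erase x (subset_univ X))
      (by rw [card_erase_of_mem hx]; omega)
      (by rw [card_erase_of_mem (mem_univ x), card_univ, Fintype.card_fin]; omega)
  have hxB : x ∉ B := fun hxB ↦ (mem_erase.mp (hBx hxB)).1 rfl
  refine ⟨B, mem_powersetCard.mpr ⟨subset_univ B, hB⟩, ?_⟩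
  rw [← insert_erase hx, insert_sdiff_of_notMem _ hxB, sdiff_eq_empty_iff_subset.mpr hXB]
  rfl

lemma exists_isTuranSystem {n s t : ℕ} (h : t ≤ s) : ∃ T, IsTuranSystem n s t T := by
  refine ⟨powersetCard t univ, fun B hB ↦ (mem_powersetCard.mp hB).2, fun X hX ↦ ?_⟩
  obtain ⟨B, hBX, hB⟩ := exists_subset_card_eq (hX ▸ h)
  exact ⟨B, mem_powersetCard.mpr ⟨subset_univ B, hB⟩, hBX⟩

lemma IsTuranSystem.nonempty {n s t : ℕ} {T : Finset (Finset (Fin n))}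
    (hT : IsTuranSystem n s t T) (hs : s ≤ n) : T.Nonempty := by
  obtain ⟨X, hX⟩ := powersetCard_nonempty.mpr (by rwa [card_univ, Fintype.card_fin] : s ≤ #(univ : Finset (Fin n)))
  obtain ⟨B, hB, -⟩ := hT.2 X (mem_powersetCard.mp hX).2
  exact ⟨B, hB⟩

lemma SENumber_le_card {n t : ℕ} {S : Finset (Finset (Fin n))} (hS : IsSESystem n t S) :
    SENumber n t ≤ #S :=
  Nat.sInf_le ⟨S, hS, rfl⟩

lemma exists_isSESystem_card_eq_SENumber {n t : ℕ} (h : t < n) :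
    ∃ S, IsSESystem n t S ∧ #S = SENumber n t := by
  obtain ⟨S, hS⟩ := exists_isSESystem h
  exact Nat.sInf_mem (s := {k | ∃ S, IsSESystem n t S ∧ #S = k}) ⟨#S, S, hS, rfl⟩

lemma exists_isTuranSystem_card_eq_turanNumber {n s t : ℕ} (h : t ≤ s) :
    ∃ T, IsTuranSystem n s t T ∧ #T = turanNumber n s t := by
  obtain ⟨T, hT⟩ := exists_isTuranSystem (n := n) h
  exact Nat.sInf_mem (s := {k | ∃ T, IsTuranSystem n s t T ∧ #T = k}) ⟨#T, T, hT, rfl⟩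

lemma IsSESystem.extend {m t : ℕ} {S T : Finset (Finset (Fin m))} (ht : 0 < t)
    (hS : IsSESystem m (t - 1) S) (hT : IsTuranSystem m (t + 1) t T) (hTne : T.Nonempty) :
    IsSESystem (m + 1) t
      (S.image (fun B ↦ insert (last m) (B.map castSuccEmb)) ∪ T.image (map castSuccEmb)) := by
  have hlast (B : Finset (Fin m)) : last m ∉ B.map castSuccEmb := by
    simp [castSuccEmb_apply, castSucc_ne_last]
  refine ⟨fun B hB ↦ ?_, fun X hX1 hXt ↦ ?_⟩
  · rcases mem_union.mp hB with hB | hB <;> obtain ⟨C, hC, rfl⟩ := mem_image.mp hB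
    · rw [card_insert_of_notMem (hlast C), card_map, hS.1 C hC]
      omega
    · rw [card_map, hT.1 C hC]
  set Y := X.preimage castSucc (castSucc_injective m).injOn with hYdef
  have hY : #Y + (if last m ∈ X then 1 else 0) = #X := by
    simpa using (card_sdiff_map_castSuccEmb X ∅).symm
  obtain hY0 | hYt | hYt : #Y = 0 ∨ (1 ≤ #Y ∧ #Y ≤ t) ∨ #Y = t + 1 := by split_ifs at hY <;> omega
  · obtain ⟨B, hB⟩ := hTne
    refine ⟨B.map castSuccEmb, mem_union_right _ (mem_image_of_mem _ hB), ?_⟩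
    have hYB : #(Y \ B) ≤ #Y := card_le_card sdiff_subset
    rw [card_sdiff_map_castSuccEmb, ← hYdef]
    split_ifs at hY ⊢ <;> omega
  · obtain ⟨B, hB, hYB⟩ := hS.2 Y hYt.1 (by omega)
    refine ⟨insert (last m) (B.map castSuccEmb), mem_union_left _ (mem_image_of_mem _ hB), ?_⟩
    rw [sdiff_insert, ← map_castSuccEmb_preimage_sdiff, card_map, hYB]
  · obtain ⟨B, hB, hBY⟩ := hT.2 Y hYt
    refine ⟨B.map castSuccEmb, mem_union_right _ (mem_image_of_mem _ hB), ?_⟩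
    rw [card_sdiff_map_castSuccEmb, card_sdiff_of_subset hBY, hT.1 B hB]
    split_ifs at hY ⊢ <;> omega

lemma SENumber_succ_le {m t : ℕ} (ht : 0 < t) (htm : t < m) {S T : Finset (Finset (Fin m))}
    (hS : IsSESystem m (t - 1) S) (hT : IsTuranSystem m (t + 1) t T) :
    SENumber (m + 1) t ≤ #S + #T :=
  calc SENumber (m + 1) t ≤ _ := SENumber_le_card (hS.extend ht hT (hT.nonempty htm))
    _ ≤ #S + #T := (card_union_le _ _).trans (add_le_add card_image_le card_image_le)

theorem stmt7 (n t : ℕ) (ht : 0 < t) (htn : t + 1 < n) :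
    SENumber n t ≤ SENumber (n - 1) (t - 1) + turanNumber (n - 1) (t + 1) t := by
  obtain ⟨m, rfl⟩ : ∃ m, n = m + 1 := ⟨n - 1, by omega⟩
  obtain ⟨S, hS, hScard⟩ := exists_isSESystem_card_eq_SENumber (n := m) (t := t - 1) (by omega)
  obtain ⟨T, hT, hTcard⟩ := exists_isTuranSystem_card_eq_turanNumber (n := m) (Nat.le_succ t)
  rw [Nat.add_sub_cancel, ← hScard, ← hTcard]
  exact SENumber_succ_le ht (by omega) hS hT
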